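/- Let X be a metric space, p : X̃ → X a covering map which is a local isometry, with X̃ a proper metric space. Fix x ∈ X, x̃ ∈ p⁻¹(x), and assume X̃ is simply connected and path-connected. Then for every ε > 0, the set of elements of π₁(X, x) that can be represented by a loop of length at most ε is finite, where the length of a loop is measured by the metric on X (length of a path γ : [0,1] → X is the supremum of Σ dist(γ(tᵢ), γ(tᵢ₊₁)) over partitions). -/

import Mathlib

open scoped Topology

open Set

/-- Auxiliary: lifting a path along a covering map, assuming the path image on every
dyadic subinterval of size `2⁻¹ ^ n` lies in an evenly covered set. -/
private lemma lift_exists {X Xt : Type*} [TopologicalSpace X] [TopologicalSpace Xt]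
    (p : Xt → X) (hp : IsCoveringMap p) :
    ∀ (n : ℕ) (a b : X) (γ : Path a b),
      (∀ s t : unitInterval, (t : ℝ) - (s : ℝ) ≤ (2 : ℝ)⁻¹ ^ n →
        ∃ (x₀ : X) (T : Bundle.Trivialization (p ⁻¹' {x₀}) p),
          ∀ u : unitInterval, (s : ℝ) ≤ u → (u : ℝ) ≤ t → γ u ∈ T.baseSet) →
      ∀ e : Xt, p e = a → ∃ (y : Xt) (Γ : Path e y), ∀ t, p (Γ t) = γ t := by
  intro n
  induction n with
  | zero =>
    intro a b γ H e he
    obtain ⟨x₀, T, hT⟩ := H 0 1 (by norm_num)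
    have hbase : ∀ u : unitInterval, γ u ∈ T.baseSet := fun u => hT u u.2.1 u.2.2
    set F : unitInterval → Xt := fun t => T.toOpenPartialHomeomorph.symm (γ t, (T e).2) with hF
    have hmemT : ∀ t : unitInterval, ((γ t, (T e).2) : X × (p ⁻¹' {x₀})) ∈ T.target :=
      fun t => T.mem_target.mpr (hbase t)
    have hcont : Continuous F := by
      apply T.toOpenPartialHomeomorph.continuousOn_symm.comp_continuous
      · exact (γ.continuous).prodMk continuous_const
      · exact hmemT
    have hproj : ∀ t, p (F t) = γ t := fun t => T.proj_symm_apply (hmemT t)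
    have hesrc : e ∈ T.source := T.mem_source.mpr (by rw [he, ← γ.source]; exact hbase 0)
    have hF0 : F 0 = e := by
      have h1 : ((γ 0, (T e).2) : X × (p ⁻¹' {x₀})) = T e := by
        refine Prod.ext ?_ rfl
        rw [T.coe_fst hesrc, he, γ.source]
      rw [hF]
      simp only
      rw [h1]
      exact T.toOpenPartialHomeomorph.left_inv hesrc
    exact ⟨F 1, ⟨⟨F, hcont⟩, hF0, rfl⟩, hproj⟩
  | succ n ih =>
    intro a b γ H e he
    have mem₁ : ∀ t : unitInterval, (t : ℝ) / 2 ∈ unitInterval := fun t =>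
      ⟨by linarith [t.2.1], by linarith [t.2.2]⟩
    have mem₂ : ∀ t : unitInterval, ((t : ℝ) + 1) / 2 ∈ unitInterval := fun t =>
      ⟨by linarith [t.2.1], by linarith [t.2.2]⟩
    set φ₁ : unitInterval → unitInterval := fun t => ⟨(t : ℝ) / 2, mem₁ t⟩ with hφ₁
    set φ₂ : unitInterval → unitInterval := fun t => ⟨((t : ℝ) + 1) / 2, mem₂ t⟩ with hφ₂
    have hφ₁c : Continuous φ₁ := Continuous.subtype_mk (continuous_subtype_val.div_const 2) _
    have hφ₂c : Continuous φ₂ := Continuous.subtype_mk ((continuous_subtype_val.add continuous_const).div_const 2) _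
    set γ₁ : Path a (γ (φ₁ 1)) :=
      ⟨⟨fun t => γ (φ₁ t), γ.continuous.comp hφ₁c⟩, by
        have : φ₁ 0 = 0 := Subtype.ext (by norm_num [hφ₁])
        simp only [ContinuousMap.coe_mk, this, γ.source], rfl⟩ with hγ₁
    set γ₂ : Path (γ (φ₂ 0)) b :=
      ⟨⟨fun t => γ (φ₂ t), γ.continuous.comp hφ₂c⟩, rfl, by
        have : φ₂ 1 = 1 := Subtype.ext (by norm_num [hφ₂])
        simp only [ContinuousMap.coe_mk, this, γ.target]⟩ with hγ₂
    have hmid : φ₁ 1 = φ₂ 0 := Subtype.ext (by norm_num [hφ₁, hφ₂])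
    have H₁ : ∀ s t : unitInterval, (t : ℝ) - (s : ℝ) ≤ (2 : ℝ)⁻¹ ^ n →
        ∃ (x₀ : X) (T : Bundle.Trivialization (p ⁻¹' {x₀}) p),
          ∀ u : unitInterval, (s : ℝ) ≤ u → (u : ℝ) ≤ t → γ₁ u ∈ T.baseSet := by
      intro s t hst
      obtain ⟨x₀, T, hT⟩ := H (φ₁ s) (φ₁ t) (by
        show (t : ℝ) / 2 - (s : ℝ) / 2 ≤ _
        rw [pow_succ]
        linarith)
      refine ⟨x₀, T, fun u h1 h2 => hT (φ₁ u) ?_ ?_⟩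
      · show (s : ℝ) / 2 ≤ (u : ℝ) / 2; linarith
      · show (u : ℝ) / 2 ≤ (t : ℝ) / 2; linarith
    have H₂ : ∀ s t : unitInterval, (t : ℝ) - (s : ℝ) ≤ (2 : ℝ)⁻¹ ^ n →
        ∃ (x₀ : X) (T : Bundle.Trivialization (p ⁻¹' {x₀}) p),
          ∀ u : unitInterval, (s : ℝ) ≤ u → (u : ℝ) ≤ t → γ₂ u ∈ T.baseSet := by
      intro s t hst
      obtain ⟨x₀, T, hT⟩ := H (φ₂ s) (φ₂ t) (by
        show ((t : ℝ) + 1) / 2 - ((s : ℝ) + 1) / 2 ≤ _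
        rw [pow_succ]
        linarith)
      refine ⟨x₀, T, fun u h1 h2 => hT (φ₂ u) ?_ ?_⟩
      · show ((s : ℝ) + 1) / 2 ≤ ((u : ℝ) + 1) / 2; linarith
      · show ((u : ℝ) + 1) / 2 ≤ ((t : ℝ) + 1) / 2; linarith
    obtain ⟨y₁, Γ₁, hΓ₁⟩ := ih a (γ (φ₁ 1)) γ₁ H₁ e he
    have hy₁ : p y₁ = γ (φ₂ 0) := by
      rw [← hmid, ← γ₁.target]
      conv_lhs => rw [← Γ₁.target]
      exact hΓ₁ 1
    obtain ⟨y₂, Γ₂, hΓ₂⟩ := ih (γ (φ₂ 0)) b γ₂ H₂ y₁ hy₁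
    refine ⟨y₂, Γ₁.trans Γ₂, fun t => ?_⟩
    rw [Path.trans_apply]
    split_ifs with h
    · rw [hΓ₁]
      show γ (φ₁ _) = γ t
      congr 1
      exact Subtype.ext (show (2 * (t : ℝ)) / 2 = (t : ℝ) by ring)
    · rw [hΓ₂]
      show γ (φ₂ _) = γ t
      congr 1
      exact Subtype.ext (show ((2 * (t : ℝ) - 1) + 1) / 2 = (t : ℝ) by ring)

/-- Path lifting along a covering map between metric spaces. -/
private lemma lift_path {X Xt : Type*} [MetricSpace X] [MetricSpace Xt]
    (p : Xt → X) (hp : IsCoveringMap p) {a b : X} (γ : Path a b) (e : Xt) (he : p e = a) :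
    ∃ (y : Xt) (Γ : Path e y), ∀ t, p (Γ t) = γ t := by
  have hrange : IsClopen (range p) := by
    refine ⟨?_, hp.isOpenMap.isOpen_range⟩
    rw [← isOpen_compl_iff, isOpen_iff_forall_mem_open]
    intro y hy
    obtain ⟨-, U, hyU, hU, -, H, -⟩ := hp y
    refine ⟨U, ?_, hU, hyU⟩
    rintro z hzU ⟨w, rfl⟩
    exact hy ⟨(H ⟨w, hzU⟩).2.1, (H ⟨w, hzU⟩).2.2⟩
  haveI hne : ∀ t, Nonempty (p ⁻¹' {γ t}) := by
    have hcl : IsClopen (γ ⁻¹' range p) := hrange.preimage γ.continuous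
    have := hcl.eq_univ ⟨0, by rw [mem_preimage, γ.source]; exact ⟨e, he⟩⟩
    intro t
    obtain ⟨w, hw⟩ : γ t ∈ range p := by rw [← mem_preimage, this]; trivial
    exact ⟨⟨w, hw⟩⟩
  set V : unitInterval → Set unitInterval :=
    fun t => γ ⁻¹' ((hp (γ t)).toTrivialization.baseSet) with hV
  have hVopen : ∀ t, IsOpen (V t) :=
    fun t => ((hp (γ t)).toTrivialization.open_baseSet).preimage γ.continuous
  have hVcover : (univ : Set unitInterval) ⊆ ⋃ t, V t := fun t _ =>
    mem_iUnion.mpr ⟨t, (hp (γ t)).mem_toTrivialization_baseSet⟩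
  obtain ⟨δ, hδ, hball⟩ := lebesgue_number_lemma_of_metric isCompact_univ hVopen hVcover
  obtain ⟨n, hn⟩ := exists_pow_lt_of_lt_one hδ (by norm_num : (2 : ℝ)⁻¹ < 1)
  apply lift_exists p hp n a b γ _ e he
  intro s t hst
  rcases le_or_gt (s : ℝ) (t : ℝ) with h | h
  · obtain ⟨w, hw⟩ := hball s trivial
    refine ⟨γ w, (hp (γ w)).toTrivialization, fun u h1 h2 => hw ?_⟩
    have : dist u s < δ := by
      rw [Subtype.dist_eq, Real.dist_eq, abs_of_nonneg (by linarith)]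
      linarith
    exact this
  · exact ⟨γ s, (hp (γ s)).toTrivialization, fun u h1 h2 => False.elim (by linarith)⟩

/-- Parshin's lemma: let `p : X̃ → X` be a covering map between metric spaces which is a
local isometry, with `X̃` proper, path-connected and simply connected. Then for every
`ε > 0`, the set of elements of `π₁(X, x)` representable by a loop of length at most `ε`
is finite (length = total variation of the loop). -/
theorem stmt_14 {X Xt : Type*} [MetricSpace X] [MetricSpace Xt] [ProperSpace Xt]
    [PathConnectedSpace Xt] [SimplyConnectedSpace Xt]
    (p : Xt → X) (hp : IsCoveringMap p)
    (hloc : ∀ y : Xt, ∃ U ∈ nhds y, ∀ a ∈ U, ∀ b ∈ U, dist (p a) (p b) = dist a b)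
    (x : X) (xt : Xt) (hxt : p xt = x) (ε : ℝ) (hε : 0 < ε) :
    {g : FundamentalGroup X x | ∃ γ : Path x x,
      @FundamentalGroup.fromPath (TopCat.of X) _ x ⟦γ⟧ = g ∧
      eVariationOn (γ : unitInterval → X) Set.univ ≤ ENNReal.ofReal ε}.Finite := by
  classical
  set K := p ⁻¹' {x} ∩ Metric.closedBall xt ε with hK
  -- the candidate endpoints form a finite set
  have hKfin : K.Finite := by
    have hKcl : IsClosed K :=
      (isClosed_singleton.preimage hp.continuous).inter Metric.isClosed_closedBall
    have hKcp : IsCompact K :=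
      (isCompact_closedBall xt ε).of_isClosed_subset hKcl inter_subset_right
    have hdisc : DiscreteTopology (p ⁻¹' {x}) := (hp x).1
    exact hKcp.finite ⟨DiscreteTopology.of_subset hdisc inter_subset_left⟩
  -- every admissible loop lifts to a path ending in K
  have main : ∀ γ : Path x x, eVariationOn (γ : unitInterval → X) Set.univ ≤ ENNReal.ofReal ε →
      ∃ (y : Xt), y ∈ K ∧ ∃ Γ : Path xt y, ∀ t, p (Γ t) = γ t := by
    intro γ hγ
    obtain ⟨y, Γ, hΓ⟩ := lift_path p hp γ xt hxt
    have hpy : p y = x := by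
      conv_lhs => rw [← Γ.target]
      rw [hΓ 1, γ.target]
    refine ⟨y, ⟨hpy, ?_⟩, Γ, hΓ⟩
    -- distance bound via local isometry and bounded variation
    choose U hU hUiso using hloc
    have hcov : ∀ z : Xt, z ∈ interior (U z) := fun z => mem_interior_iff_mem_nhds.mpr (hU z)
    obtain ⟨δ, hδ, hball⟩ := lebesgue_number_lemma_of_metric (isCompact_range Γ.continuous)
      (fun z => isOpen_interior (s := U z)) (fun w _ => mem_iUnion.mpr ⟨w, hcov w⟩)
    have hUC : UniformContinuous Γ :=
      CompactSpace.uniformContinuous_of_continuous Γ.continuous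
    rw [Metric.uniformContinuous_iff] at hUC
    obtain ⟨δ', hδ', hΓδ⟩ := hUC δ hδ
    obtain ⟨m, hm⟩ := exists_nat_one_div_lt hδ'
    set n : ℕ := m + 1 with hn
    have hnpos : (0 : ℝ) < n := by positivity
    set u : ℕ → unitInterval := fun i => ⟨min ((i : ℝ) / n) 1,
      ⟨le_min (by positivity) zero_le_one, min_le_right _ _⟩⟩ with hu
    have huv : ∀ i : ℕ, (u i : ℝ) = min ((i : ℝ) / n) 1 := fun i => by simp only [hu]
    have humono : Monotone u := by
      intro i j hij
      show (u i : ℝ) ≤ (u j : ℝ)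
      rw [huv, huv]
      have : ((i : ℝ)) ≤ j := by exact_mod_cast hij
      exact min_le_min (by gcongr) le_rfl
    have hu0 : u 0 = 0 := Subtype.ext (by simp [hu])
    have hun : u n = 1 := Subtype.ext (by
      simp [hu, div_self (ne_of_gt hnpos)])
    have hstep : ∀ i : ℕ, dist (u (i + 1)) (u i) ≤ 1 / n := by
      intro i
      rw [Subtype.dist_eq, Real.dist_eq,
        abs_of_nonneg (by exact sub_nonneg.mpr (humono (Nat.le_succ i)))]
      rw [huv, huv, Nat.cast_add, Nat.cast_one]
      have hadd : ((i : ℝ) + 1) / n = (i : ℝ) / n + 1 / n := add_div _ _ _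
      have h1n : (0 : ℝ) < 1 / n := by positivity
      rcases le_total ((i : ℝ) / n) 1 with h3 | h3
      · rcases le_total (((i : ℝ) + 1) / n) 1 with h1 | h1
        · rw [min_eq_left h1, min_eq_left h3]; linarith
        · rw [min_eq_right h1, min_eq_left h3]; linarith
      · rw [min_eq_right (by linarith), min_eq_right h3]; linarith
    have hsame : ∀ i : ℕ, dist (Γ (u i)) (Γ (u (i + 1))) = dist ((γ : unitInterval → X) (u i))
        ((γ : unitInterval → X) (u (i + 1))) := by
      intro i
      obtain ⟨z, hz⟩ := hball (Γ (u i)) (mem_range_self _)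
      have h1 : Γ (u i) ∈ U z := interior_subset (hz (Metric.mem_ball_self hδ))
      have h2 : Γ (u (i + 1)) ∈ U z := by
        refine interior_subset (hz ?_)
        rw [Metric.mem_ball]
        apply hΓδ
        calc dist (u (i + 1)) (u i) ≤ 1 / n := hstep i
          _ < δ' := by rw [hn]; push_cast; exact hm
      rw [← hΓ (u i), ← hΓ (u (i + 1))]
      exact (hUiso z _ h1 _ h2).symm
    have hsum : ∑ i ∈ Finset.range n, edist ((γ : unitInterval → X) (u (i + 1)))
        ((γ : unitInterval → X) (u i)) ≤ ENNReal.ofReal ε :=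
      le_trans (eVariationOn.sum_le (n := n) humono (fun i => mem_univ _)) hγ
    have hsumd : ∑ i ∈ Finset.range n, dist ((γ : unitInterval → X) (u i))
        ((γ : unitInterval → X) (u (i + 1))) ≤ ε := by
      have h1 : ∑ i ∈ Finset.range n, dist ((γ : unitInterval → X) (u i))
          ((γ : unitInterval → X) (u (i + 1))) =
          (∑ i ∈ Finset.range n, edist ((γ : unitInterval → X) (u (i + 1)))
            ((γ : unitInterval → X) (u i))).toReal := by
        rw [ENNReal.toReal_sum (fun a _ => edist_ne_top _ _)]
        refine Finset.sum_congr rfl fun i _ => ?_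
        rw [dist_edist, edist_comm]
      rw [h1]
      exact ENNReal.toReal_le_of_le_ofReal hε.le hsum
    rw [Metric.mem_closedBall, dist_comm]
    calc dist xt y = dist (Γ (u 0)) (Γ (u n)) := by
          rw [hu0, hun, Γ.source, Γ.target]
      _ ≤ ∑ i ∈ Finset.range n, dist (Γ (u i)) (Γ (u (i + 1))) :=
          dist_le_range_sum_dist (fun i => Γ (u i)) n
      _ = ∑ i ∈ Finset.range n, dist ((γ : unitInterval → X) (u i))
            ((γ : unitInterval → X) (u (i + 1))) := Finset.sum_congr rfl fun i _ => hsame i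
      _ ≤ ε := hsumd
  -- two loops with lifts ending at the same point are homotopic
  have inj : ∀ (γ₁ γ₂ : Path x x) (y₁ y₂ : Xt) (Γ₁ : Path xt y₁) (Γ₂ : Path xt y₂),
      y₁ = y₂ → (∀ t, p (Γ₁ t) = γ₁ t) → (∀ t, p (Γ₂ t) = γ₂ t) →
      (⟦γ₁⟧ : Path.Homotopic.Quotient x x) = ⟦γ₂⟧ := by
    intro γ₁ γ₂ y₁ y₂ Γ₁ Γ₂ hy h1 h2
    subst hy
    have hh : Path.Homotopic Γ₁ Γ₂ := SimplyConnectedSpace.paths_homotopic Γ₁ Γ₂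
    have hm : Path.Homotopic (Γ₁.map hp.continuous) (Γ₂.map hp.continuous) :=
      Path.Homotopic.map hh ⟨p, hp.continuous⟩
    obtain ⟨Hm⟩ := hm
    have e1 : (Γ₁.map hp.continuous).toContinuousMap = γ₁.toContinuousMap := by
      ext t; exact h1 t
    have e2 : (Γ₂.map hp.continuous).toContinuousMap = γ₂.toContinuousMap := by
      ext t; exact h2 t
    exact Quotient.sound ⟨ContinuousMap.HomotopyRel.cast Hm e1 e2⟩
  -- now conclude by injecting the set into the finite set `K`
  rw [← Set.finite_coe_iff]
  set S := {g : FundamentalGroup X x | ∃ γ : Path x x,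
      @FundamentalGroup.fromPath (TopCat.of X) _ x ⟦γ⟧ = g ∧
      eVariationOn (γ : unitInterval → X) Set.univ ≤ ENNReal.ofReal ε} with hS
  have : Finite ↥K := hKfin.to_subtype
  choose γsel hsel1 hsel2 using fun g : ↥S => g.2
  choose ysel hyK Γsel hΓsel using fun g : ↥S => main (γsel g) (hsel2 g)
  refine Finite.of_injective (fun g : ↥S => (⟨ysel g, hyK g⟩ : ↥K)) ?_
  intro g₁ g₂ hgg
  have hy : ysel g₁ = ysel g₂ := congrArg Subtype.val hgg
  have hq : (⟦γsel g₁⟧ : Path.Homotopic.Quotient x x) = ⟦γsel g₂⟧ :=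
    inj _ _ _ _ (Γsel g₁) (Γsel g₂) hy (hΓsel g₁) (hΓsel g₂)
  have : (g₁ : FundamentalGroup X x) = g₂ := by
    rw [← hsel1 g₁, ← hsel1 g₂, hq]
  exact Subtype.ext this
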